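/- arXiv:1603.09713 — 3 statements merged into one kernel-verified Lean document; each statement's English description precedes it below -/
import Mathlib

section
/- Let P be a partial field, let M be a matroid, let B be a basis of M with B* = E(M)−B, and let A be a B×B* matrix over P such that, for distinct a,b ∈ B*, the matrices A−a and A−b are P-matrices with M∖a = M[I|(A−a)] and M∖b = M[I|(A−b)]. Suppose that {a,b,x,y} incriminates (M,A), where {x,y} ⊆ B and {a,b} ⊆ B*. Then A_{ij} ≠ 0 for all i ∈ {x,y} and j ∈ {a,b}. -/
open Set Matroid

namespace ExcludedMinorsFragile

variable {α : Type*}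

/-! ### Basic matroid operations not present in this Mathlib version -/

/-- Deletion of a set of elements from a matroid. -/
noncomputable def del (M : Matroid α) (D : Set α) : Matroid α := M ↾ (M.E \ D)

/-- Contraction of a set of elements in a matroid. -/
noncomputable def con (M : Matroid α) (C : Set α) : Matroid α := (M✶ ↾ (M.E \ C))✶

/-- The extended rank of a set in a matroid. -/
noncomputable def eRk (M : Matroid α) (X : Set α) : ℕ∞ :=
  ⨆ I ∈ {I : Set α | M.Indep I ∧ I ⊆ X}, I.encard

/-- `N` is (literally) a minor of `M`. -/
def IsMinorOf (N M : Matroid α) : Prop :=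
  ∃ C D : Set α, Disjoint C D ∧ C ⊆ M.E ∧ D ⊆ M.E ∧ N = del (con M C) D

/-- Isomorphism of matroids (on the same type). -/
def MatIso (M N : Matroid α) : Prop :=
  ∃ f : α → α, Set.BijOn f M.E N.E ∧ ∀ I, I ⊆ M.E → (M.Indep I ↔ N.Indep (f '' I))

/-- `M` has a minor isomorphic to `N`. -/
def HasNMinor (M N : Matroid α) : Prop :=
  ∃ M' : Matroid α, IsMinorOf M' M ∧ MatIso M' N

/-! ### Connectivity -/

/-- A (Tutte) `k`-separation of `M`. -/
def KSep (M : Matroid α) (k : ℕ) (X Y : Set α) : Prop :=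
  Disjoint X Y ∧ X ∪ Y = M.E ∧ (k : ℕ∞) ≤ X.encard ∧ (k : ℕ∞) ≤ Y.encard ∧
    eRk M X + eRk M Y + 1 ≤ eRk M M.E + k

/-- A matroid is `3`-connected if it has no `k`-separation for `k < 3`. -/
def ThreeConnected (M : Matroid α) : Prop :=
  ∀ (k : ℕ) (X Y : Set α), k < 3 → ¬ KSep M k X Y

/-- An exact 3-separation (both sides of size at least 3, connectivity exactly two). -/
def Sep3 (M : Matroid α) (X Y : Set α) : Prop :=
  Disjoint X Y ∧ X ∪ Y = M.E ∧ (3 : ℕ∞) ≤ X.encard ∧ (3 : ℕ∞) ≤ Y.encard ∧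
    eRk M X + eRk M Y ≤ eRk M M.E + 2

/-! ### Circuits, triangles, triads, segments -/

/-- A circuit : a minimal dependent set. -/
def Circuit (M : Matroid α) (C : Set α) : Prop :=
  C ⊆ M.E ∧ ¬ M.Indep C ∧ ∀ x ∈ C, M.Indep (C \ {x})

/-- A triangle : a 3-element circuit. -/
def IsTriangle (M : Matroid α) (T : Set α) : Prop :=
  Circuit M T ∧ T.encard = 3

/-- A triad : a 3-element cocircuit. -/
def IsTriad (M : Matroid α) (T : Set α) : Prop :=
  Circuit M✶ T ∧ T.encard = 3

/-- A cosegment : every 3-element subset is a triad. -/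
def Cosegment (M : Matroid α) (C : Set α) : Prop :=
  C ⊆ M.E ∧ ∀ T ⊆ C, T.encard = 3 → IsTriad M T

/-! ### Parallel and series classes, simplification and cosimplification -/

/-- Two elements are parallel if they are nonloops with the same closure. -/
def Parallel (M : Matroid α) (e f : α) : Prop :=
  M.Indep {e} ∧ M.Indep {f} ∧ M.closure {e} = M.closure {f}

/-- A parallel class of `M`. -/
def ParallelClass (M : Matroid α) (S : Set α) : Prop :=
  ∃ e, M.Indep {e} ∧ S = {f | Parallel M e f}

/-- A series class of `M` : a parallel class of the dual. -/
def SeriesClass (M : Matroid α) (S : Set α) : Prop :=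
  ParallelClass M✶ S

/-- A transversal of the parallel classes of `M`; restricting to such a set gives
a simplification `si(M)` of `M`. -/
def SimpTransversal (M : Matroid α) (S : Set α) : Prop :=
  (∀ e ∈ S, M.Indep {e}) ∧ ∀ e, M.Indep {e} → ∃! f, f ∈ S ∧ Parallel M e f

/-- The cosimplification of `M` determined by the transversal `S` of the
series classes of `M`: `co(M) = (si(M✶))✶`. -/
noncomputable def coOf (M : Matroid α) (S : Set α) : Matroid α := (M✶ ↾ S)✶

/-- `si(M)` is 3-connected. -/
def SiThreeConnected (M : Matroid α) : Prop :=
  ∃ S, SimpTransversal M S ∧ ThreeConnected (M ↾ S)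

/-- `co(M)` is 3-connected. -/
def CoThreeConnected (M : Matroid α) : Prop :=
  ∃ S, SimpTransversal M✶ S ∧ ThreeConnected (coOf M S)

/-- `si(M)` is 3-connected and has an `N`-minor. -/
def SiThreeConnectedWith (N M : Matroid α) : Prop :=
  ∃ S, SimpTransversal M S ∧ ThreeConnected (M ↾ S) ∧ HasNMinor (M ↾ S) N

/-- `co(M)` is 3-connected and has an `N`-minor. -/
def CoThreeConnectedWith (N M : Matroid α) : Prop :=
  ∃ S, SimpTransversal M✶ S ∧ ThreeConnected (coOf M S) ∧ HasNMinor (coOf M S) N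

/-- `M` is 3-connected up to series pairs: `co(M)` is 3-connected and every non-trivial
series class of `M` has exactly two elements. -/
def ThreeConnUpToSeriesPairs (M : Matroid α) : Prop :=
  CoThreeConnected M ∧ ∀ S, SeriesClass M S → 2 ≤ S.encard → S.encard = 2

/-- `Q` is isomorphic to the uniform matroid `U_{1,3}`. -/
def IsoU13 (Q : Matroid α) : Prop :=
  Q.E.encard = 3 ∧ (∀ e ∈ Q.E, Q.Indep {e}) ∧
    ∀ e ∈ Q.E, ∀ f ∈ Q.E, e ≠ f → ¬ Q.Indep {e, f}

/-! ### Wheels and whirls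

By Tutte's characterisation, a 3-connected matroid with at least four elements is a wheel
or a whirl if and only if every element is in both a triangle and a triad. -/

def WheelOrWhirl (N : Matroid α) : Prop :=
  ThreeConnected N ∧ ∀ e ∈ N.E,
    (∃ T, IsTriangle N T ∧ e ∈ T) ∧ (∃ T, IsTriad N T ∧ e ∈ T)

/-! ### N-minors: deletable, contractible, flexible, fragile -/

def NDeletable (N M : Matroid α) (e : α) : Prop := HasNMinor (del M {e}) N

def NContractible (N M : Matroid α) (e : α) : Prop := HasNMinor (con M {e}) N

def NFlexible (N M : Matroid α) (e : α) : Prop := NDeletable N M e ∧ NContractible N M e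

/-- `M` is (strictly) `N`-fragile: `M` has an `N`-minor and no element is `N`-flexible. -/
def NFragile (N M : Matroid α) : Prop :=
  HasNMinor M N ∧ ∀ e ∈ M.E, ¬ NFlexible N M e

variable {α : Type*}

/-! ### Partial fields -/

/-- A partial field: a commutative ring together with a subgroup of its units containing `-1`. -/
structure PartialField where
  R : Type
  [commRing : CommRing R]
  G : Subgroup Rˣ
  neg_one_mem : -1 ∈ G

attribute [instance] PartialField.commRing

/-- The set of elements of a partial field: the members of `G` together with `0`. -/
def PartialField.carrier (P : PartialField) : Set P.R :=
  {x | x = 0 ∨ ∃ u ∈ P.G, (u : P.R) = x}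

/-- The determinant of the square submatrix of `A` with rows `Xz` and columns `Yz`,
with columns matched to rows via the bijection `e`. -/
noncomputable def subdet (P : PartialField) (A : α → α → P.R) (Xz Yz : Finset α)
    (e : {x // x ∈ Xz} ≃ {y // y ∈ Yz}) : P.R :=
  letI : DecidableEq {x // x ∈ Xz} := Classical.decEq _
  Matrix.det (Matrix.of fun i j : {x // x ∈ Xz} => A (i : α) ((e j : α)))

/-- `A` is a `P`-matrix with row set `X` and column set `Y`: every square submatrix has
determinant in `P`. -/
def IsPMatrix (P : PartialField) (X Y : Set α) (A : α → α → P.R) : Prop :=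
  ∀ (Xz Yz : Finset α), ↑Xz ⊆ X → ↑Yz ⊆ Y →
    ∀ e : {x // x ∈ Xz} ≃ {y // y ∈ Yz}, subdet P A Xz Yz e ∈ P.carrier

/-- The square submatrix `A[Z]` (rows `X ∩ Z`, columns `Y ∩ Z`) has nonzero determinant. -/
def NonzeroSubdet (P : PartialField) (A : α → α → P.R) (X Y Z : Set α) : Prop :=
  ∃ (Xz Yz : Finset α) (e : {x // x ∈ Xz} ≃ {y // y ∈ Yz}),
    ↑Xz = X ∩ Z ∧ ↑Yz = Y ∩ Z ∧ subdet P A Xz Yz e ≠ 0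

/-- `M = M[I|A]`, where `A` has row set `X` and column set `Y`:  the ground set of `M` is
`X ∪ Y` and the bases of `M` are `X` together with the sets `X △ Z` for `Z ⊆ X ∪ Y` with
`|X ∩ Z| = |Y ∩ Z|` and `det A[Z] ≠ 0`. -/
def Represents (P : PartialField) (X Y : Set α) (A : α → α → P.R) (M : Matroid α) : Prop :=
  Disjoint X Y ∧ M.E = X ∪ Y ∧
    ∀ Bs : Set α, M.IsBase Bs ↔
      (Bs = X ∨ ∃ Z ⊆ X ∪ Y, Bs = symmDiff X Z ∧ (X ∩ Z).encard = (Y ∩ Z).encard ∧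
        NonzeroSubdet P A X Y Z)

/-- `M` is `P`-representable. -/
def PRep (P : PartialField) (M : Matroid α) : Prop :=
  ∃ (X Y : Set α) (A : α → α → P.R), IsPMatrix P X Y A ∧ Represents P X Y A M

/-- `M` is an excluded minor for the class of `P`-representable matroids. -/
def ExcludedMinor (P : PartialField) (M : Matroid α) : Prop :=
  ¬ PRep P M ∧ ∀ C D : Set α, Disjoint C D → C ⊆ M.E → D ⊆ M.E → (C ∪ D).Nonempty →
    PRep P (del (con M C) D)

/-- Two matrices with row set `X` and column set `Y` are scaling equivalent. -/
def ScalingEquiv (P : PartialField) (X Y : Set α) (A1 A2 : α → α → P.R) : Prop :=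
  ∃ r c : α → P.Rˣ, (∀ i ∈ X, r i ∈ P.G) ∧ (∀ j ∈ Y, c j ∈ P.G) ∧
    ∀ i ∈ X, ∀ j ∈ Y, A2 i j = (r i : P.R) * A1 i j * (c j : P.R)

/-- `N` is a `P`-stabilizer for the class of `P`-representable matroids. -/
def IsStabilizer (P : PartialField) (N : Matroid α) : Prop :=
  ThreeConnected N ∧ PRep P N ∧
  ∀ (M N' : Matroid α), ThreeConnected M → PRep P M → MatIso N' N → IsMinorOf N' M →
    ∀ (X Y X' Y' : Set α) (A1 A2 : α → α → P.R),
      N'.E = X' ∪ Y' → N'.IsBase X' → X' ⊆ X → Y' ⊆ Y →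
      IsPMatrix P X Y A1 → IsPMatrix P X Y A2 →
      Represents P X Y A1 M → Represents P X Y A2 M →
      Represents P X' Y' A1 N' → Represents P X' Y' A2 N' →
      ScalingEquiv P X' Y' A1 A2 →
      ScalingEquiv P X Y A1 A2

/-- `N` is a strong `P`-stabilizer: a `P`-stabilizer such that every `P`-representation of `N`
extends to a `P`-representation of every 3-connected `P`-representable matroid with an
`N`-minor. -/
def IsStrongStabilizer (P : PartialField) (N : Matroid α) : Prop :=
  IsStabilizer P N ∧
  ∀ (M N' : Matroid α), ThreeConnected M → PRep P M → MatIso N' N → IsMinorOf N' M →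
    ∀ (X' Y' : Set α) (A' : α → α → P.R),
      N'.E = X' ∪ Y' → N'.IsBase X' → IsPMatrix P X' Y' A' → Represents P X' Y' A' N' →
      ∃ (X Y : Set α) (A : α → α → P.R), X' ⊆ X ∧ Y' ⊆ Y ∧ IsPMatrix P X Y A ∧
        Represents P X Y A M ∧ ∀ i ∈ X', ∀ j ∈ Y', A i j = A' i j

/-- `Z` incriminates the pair `(M, A)`, where `A` is a `B × (E(M) − B)` matrix. -/
def Incriminates (P : PartialField) (M : Matroid α) (B : Set α) (A : α → α → P.R)
    (Z : Set α) : Prop :=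
  Z ⊆ M.E ∧ ∃ (Xz Yz : Finset α) (e : {x // x ∈ Xz} ≃ {y // y ∈ Yz}),
    ↑Xz = B ∩ Z ∧ ↑Yz = (M.E \ B) ∩ Z ∧
    (subdet P A Xz Yz e ∉ P.carrier ∨
     (subdet P A Xz Yz e = 0 ∧ M.IsBase (symmDiff B Z)) ∨
     (subdet P A Xz Yz e ≠ 0 ∧ M.Dep (symmDiff B Z)))

/-! ### Companion matrices and the Setup -/

/-- `A` is a companion matrix for the excluded minor `M` with deletion pair `{a,b}`,
relative to the basis `B` of `M ∖ {a,b}` and stabilizer `N`. -/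
structure IsCompanion (P : PartialField) (M N : Matroid α) (a b : α) (B : Set α)
    (A : α → α → P.R) : Prop where
  pMata : IsPMatrix P B ((M.E \ B) \ {a}) A
  pMatb : IsPMatrix P B ((M.E \ B) \ {b}) A
  repa : Represents P B ((M.E \ B) \ {a}) A (del M {a})
  repb : Represents P B ((M.E \ B) \ {b}) A (del M {b})
  repN : ∃ (N' : Matroid α) (X' Y' : Set α), MatIso N' N ∧
      IsMinorOf N' (del M {a, b}) ∧ N'.E = X' ∪ Y' ∧ N'.IsBase X' ∧
      X' ⊆ B ∧ Y' ⊆ (M.E \ B) \ {a, b} ∧ IsPMatrix P X' Y' A ∧ Represents P X' Y' A N'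

/-- The Setup: `N` is a 3-connected strong `P`-stabilizer with at least 4 elements that is
neither a wheel nor a whirl; `M` is an excluded minor for `P`-representability; `{a,b}` is a
deletion pair with `M ∖ {a,b}` 3-connected with an `N`-minor; `B` is a basis of `M ∖ {a,b}`;
`A` is a companion matrix for `M`; and `{a,b,x,y}` incriminates `(M,A)` with `x,y ∈ B`. -/
structure Setup (P : PartialField) (M N : Matroid α) (a b x y : α) (B : Set α)
    (A : α → α → P.R) : Prop where
  mFin : M.Finite
  nFin : N.Finite
  hN3 : ThreeConnected N
  hNcard : 4 ≤ N.E.encard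
  hStrong : IsStrongStabilizer P N
  hNW : ¬ WheelOrWhirl N
  hab : a ≠ b
  haE : a ∈ M.E
  hbE : b ∈ M.E
  hExcl : ExcludedMinor P M
  h3conn : ThreeConnected (del M {a, b})
  hNminor : HasNMinor (del M {a, b}) N
  hB : (del M {a, b}).IsBase B
  hComp : IsCompanion P M N a b B A
  hx : x ∈ B
  hy : y ∈ B
  hxy : x ≠ y
  hInc : Incriminates P M B A {a, b, x, y}

/-! ### Robust and strong elements -/

/-- `e` is an `(N,B)`-robust element of `M'`. -/
def Robust (N M' : Matroid α) (B : Set α) (e : α) : Prop :=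
  (e ∈ B ∧ HasNMinor (con M' {e}) N) ∨ (e ∈ M'.E \ B ∧ HasNMinor (del M' {e}) N)

/-- `e` is an `(N,B)`-strong element of `M'`. -/
def Strong (N M' : Matroid α) (B : Set α) (e : α) : Prop :=
  (e ∈ B ∧ SiThreeConnectedWith N (con M' {e})) ∨
  (e ∈ M'.E \ B ∧ CoThreeConnectedWith N (del M' {e}))

/-- An admissible tuple for the excluded minor `M` with deletion pair `{a,b}`:
a basis `B` of `M ∖ {a,b}`, a companion matrix `A`, and elements `x, y ∈ B`
such that `{a,b,x,y}` incriminates `(M,A)`. -/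
def Admissible (P : PartialField) (M N : Matroid α) (a b : α) (B : Set α)
    (A : α → α → P.R) (x y : α) : Prop :=
  (del M {a, b}).IsBase B ∧ IsCompanion P M N a b B A ∧ x ∈ B ∧ y ∈ B ∧ x ≠ y ∧
    Incriminates P M B A {a, b, x, y}

/-- `B` (with companion matrix `A` and incriminating pair `x,y`) is a robust basis for `M`:
no admissible tuple has more robust elements outside its incriminating pair. -/
def RobustBasis (P : PartialField) (M N : Matroid α) (a b : α) (B : Set α)
    (A : α → α → P.R) (x y : α) : Prop :=
  Admissible P M N a b B A x y ∧
  ∀ (B' : Set α) (A' : α → α → P.R) (x' y' : α), Admissible P M N a b B' A' x' y' →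
    {e ∈ (del M {a, b}).E | Robust N (del M {a, b}) B' e ∧ e ∉ ({x', y'} : Set α)}.encard ≤
    {e ∈ (del M {a, b}).E | Robust N (del M {a, b}) B e ∧ e ∉ ({x, y} : Set α)}.encard

/-! ### Confining sets -/

/-- A confining set of `M'` (relative to the basis `B` and the incriminating pair `x,y`). -/
def ConfiningSet (N M' : Matroid α) (B : Set α) (x y : α) (G : Set α) : Prop :=
  G ⊆ M'.E ∧ G ∩ B = {x, y} ∧
  ∃ T T' : Set α, IsTriad M' T ∧ IsTriad M' T' ∧ G = T ∪ T' ∧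
    ((T ∩ T').encard = 1 ∨ (T ∩ T').encard = 2) ∧
    G ⊆ M'✶.closure (G \ B) ∧
    ((T ∩ T').encard = 1 → ∃ u ∈ G \ B, Strong N M' B u)

/-! ### Binary matroids, 2-sums and `N`-stability -/

/-- The partial field `GF(2)`. -/
def GF2 : PartialField := { R := ZMod 2, G := ⊤, neg_one_mem := Subgroup.mem_top _ }

/-- A binary matroid : one representable over `GF(2)`. -/
def Binary (Q : Matroid α) : Prop := PRep GF2 Q

/-- `M` is the 2-sum of `MX` and `MY` along the basepoint `p`, characterised by circuits. -/
def IsTwoSumOf (M MX MY : Matroid α) (p : α) : Prop :=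
  p ∉ M.E ∧ MX.E ∩ MY.E = {p} ∧ M.E = (MX.E ∪ MY.E) \ {p} ∧
  ∀ C : Set α, Circuit M C ↔
    ((Circuit MX C ∧ p ∉ C) ∨ (Circuit MY C ∧ p ∉ C) ∨
      ∃ C1 C2, Circuit MX C1 ∧ Circuit MY C2 ∧ p ∈ C1 ∧ p ∈ C2 ∧
        C = (C1 \ {p}) ∪ (C2 \ {p}))

/-- `Q` is `N`-stable: `Q` has an `N`-minor and, for every 2-separation `(X,Y)` of `Q` with
`|X ∩ E(N)| ≤ 1` (for an embedded copy of `N`), the matroid corresponding to `X` in the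
1- or 2-sum decomposition of `Q` induced by `(X,Y)` is binary. -/
def NStable (N Q : Matroid α) : Prop :=
  HasNMinor Q N ∧
  ∀ N' : Matroid α, IsMinorOf N' Q → MatIso N' N →
    ∀ X Y : Set α, KSep Q 2 X Y → (X ∩ N'.E).encard ≤ 1 →
      ((eRk Q X + eRk Q Y ≤ eRk Q Q.E → Binary (Q ↾ X)) ∧
        ∀ (MX MY : Matroid α) (p : α), IsTwoSumOf Q MX MY p → MX.E = insert p X →
          Binary MX)

/-- An unstable series pair of `M' ∖ u` (where `M' = M ∖ {a,b}`): a 2-element series class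
`S` of `M' ∖ u` with some element of `{a,b}` in the closure of `S` in `M`. -/
def UnstableSeriesPair (M : Matroid α) (a b u : α) (S : Set α) : Prop :=
  SeriesClass (del M {a, b, u}) S ∧ S.encard = 2 ∧
    (a ∈ M.closure S ∨ b ∈ M.closure S)

/-! ### Vertical 3-separations -/

/-- A vertical 3-separation `(X, z, Y)` of `M`. -/
def VertSep3 (M : Matroid α) (X : Set α) (z : α) (Y : Set α) : Prop :=
  Disjoint X Y ∧ z ∉ X ∧ z ∉ Y ∧ insert z (X ∪ Y) = M.E ∧
    Sep3 M (insert z X) Y ∧ Sep3 M X (insert z Y) ∧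
    3 ≤ eRk M X ∧ 3 ≤ eRk M Y ∧ z ∈ M.closure X ∧ z ∈ M.closure Y

/-- `Y` is `z`-closed: `Y = cl*(Y)` and `Y = cl(Y) − {z}`. -/
def ZClosed (M : Matroid α) (z : α) (Y : Set α) : Prop :=
  M✶.closure Y = Y ∧ M.closure Y \ {z} = Y

/-! ### Fans -/

/-- `(f1,f2,f3,f4)` is a type-II fan of `M` relative to the basis `B` : `{f1,f2,f3}` is a
triangle, `{f2,f3,f4}` is a triad, and `B ∩ {f1,f2,f3,f4} = {f1,f3,f4}`. -/
def TypeIIFan (M : Matroid α) (B : Set α) (f1 f2 f3 f4 : α) : Prop :=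
  f1 ≠ f2 ∧ f1 ≠ f3 ∧ f1 ≠ f4 ∧ f2 ≠ f3 ∧ f2 ≠ f4 ∧ f3 ≠ f4 ∧
    IsTriangle M {f1, f2, f3} ∧ IsTriad M {f2, f3, f4} ∧
    B ∩ {f1, f2, f3, f4} = {f1, f3, f4}

/-- The 4-element fan `(f1,f2,f3,f4)` (with `{f1,f2,f3}` a triangle and `{f2,f3,f4}` a triad)
is maximal : it cannot be extended to a 5-element fan. -/
def MaximalFan4 (M : Matroid α) (f1 f2 f3 f4 : α) : Prop :=
  ¬ ∃ g, g ∉ ({f1, f2, f3, f4} : Set α) ∧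
    (IsTriad M {g, f1, f2} ∨ IsTriangle M {f3, f4, g})

/-! ### Paths of 3-separations -/

/-- The union of a list of sets. -/
def listUnion (l : List (Set α)) : Set α := l.foldr (· ∪ ·) ∅

/-- A path of 3-separations of `M`: a partition `(P1, …, Pn)` of `E(M)` such that each
prefix is exactly 3-separating. -/
def PathOf3Seps (M : Matroid α) (l : List (Set α)) : Prop :=
  l.Pairwise Disjoint ∧ listUnion l = M.E ∧
    ∀ i : ℕ, 1 ≤ i → i < l.length →
      Sep3 M (listUnion (l.take i)) (listUnion (l.drop i))

/-! ### Splitter sequences -/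

/-- A splitter sequence for `R` in `Q`: disjoint sets `C`, `D` with `Q / C ∖ D ≅ R`, and an
ordering `l` of `C ∪ D` along which every intermediate minor is 3-connected. -/
def SplitterSeq (Q R : Matroid α) (C D : Set α) (l : List α) : Prop :=
  Disjoint C D ∧ C ⊆ Q.E ∧ D ⊆ Q.E ∧ l.Nodup ∧ {x | x ∈ l} = C ∪ D ∧
    MatIso (del (con Q C) D) R ∧
    ∀ i ≤ l.length,
      ThreeConnected (del (con Q (C ∩ {x | x ∈ l.take i})) (D ∩ {x | x ∈ l.take i}))

/-! ### Δ-Y and Y-Δ exchanges -/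

/-- A flat of a matroid. -/
def IsFlat (M : Matroid α) (F : Set α) : Prop := F ⊆ M.E ∧ M.closure F = F

/-- `Q` is isomorphic to the cycle matroid `M(K4)` with `T` a (specified) triangle:
there is a labelling of the six edges of `K4` by the elements of `Q` under which the
circuits of `Q` are exactly the edge sets of the cycles of `K4`. -/
def IsMK4 (Q : Matroid α) (T : Set α) : Prop :=
  ∃ g : Fin 4 → Fin 4 → α,
    (∀ u v, g u v = g v u) ∧
    (∀ u v u' v', u ≠ v → u' ≠ v' → g u v = g u' v' → ((u = u' ∧ v = v') ∨ (u = v' ∧ v = u'))) ∧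
    Q.E = {x | ∃ u v, u ≠ v ∧ x = g u v} ∧
    T = {g 0 1, g 0 2, g 1 2} ∧
    ∀ C : Set α, Circuit Q C ↔
      ((∃ u v w, u ≠ v ∧ u ≠ w ∧ v ≠ w ∧ C = {g u v, g v w, g u w}) ∨
       (∃ u v w z, u ≠ v ∧ u ≠ w ∧ u ≠ z ∧ v ≠ w ∧ v ≠ z ∧ w ≠ z ∧
          C = {g u v, g v w, g w z, g z u}))

/-- `Pc` is the generalized parallel connection of `M1` and `M2` across the common
restriction `T`: its flats are the sets whose traces on `E(M1)` and `E(M2)` are flats. -/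
def IsGenParallelConn (M1 M2 Pc : Matroid α) (T : Set α) : Prop :=
  M1.E ∩ M2.E = T ∧ Pc.E = M1.E ∪ M2.E ∧
    ∀ F : Set α, IsFlat Pc F ↔ (IsFlat M1 (F ∩ M1.E) ∧ IsFlat M2 (F ∩ M2.E))

/-- `DM` is obtained from `M` by a Δ-Y exchange on the triangle `T`:
`DM = P_T(M(K4), M) ∖ T`. -/
def IsDeltaY (T : Set α) (M DM : Matroid α) : Prop :=
  IsTriangle M T ∧ ∃ K Pc : Matroid α, IsMK4 K T ∧ K.E ∩ M.E = T ∧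
    IsGenParallelConn K M Pc T ∧ DM = del Pc T

/-- `NQ` is obtained from `Q` by a Y-Δ exchange on the triad `T`: `∇_T(Q) = (Δ_T(Q✶))✶`. -/
def IsNablaY (T : Set α) (Q NQ : Matroid α) : Prop :=
  IsDeltaY T Q✶ NQ✶

/-!
Because `A − a` and `A − b` represent `M ∖ a` and `M ∖ b`, an entry `A i j` with `i ∈ B` and
`j ∈ {a, b}` is nonzero exactly when `B − i + j` is a basis of `M`. Let `Z = {a, b, x, y}` and
suppose `A x a = 0`. Then `det A[Z] = ± A x b * A y a` lies in `P`, so `Z` incriminates through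
a mismatch between the determinant and the matroid. If the determinant vanishes while `B △ Z` is
a basis, then `A x b = 0` or `A y a = 0`, and exchanging `x` out of `B` (respectively `a` out of
`B △ Z`) yields one of the bases `B − x + a`, `B − x + b`, `B − y + a` excluded by the zero
entries. If the determinant is nonzero while `B △ Z` is dependent, then `a ∈ cl(B − x)`,
`b ∉ cl(B − x)` and `a ∉ cl(B − y)`, which force `B △ Z` to be independent. The other entries
follow by symmetry.
-/

namespace PartialField

variable {P : PartialField} {x y : P.R}

lemma mul_mem_carrier (hx : x ∈ P.carrier) (hy : y ∈ P.carrier) : x * y ∈ P.carrier := by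
  rcases hx with rfl | ⟨u, hu, rfl⟩
  · exact Or.inl (zero_mul _)
  rcases hy with rfl | ⟨v, hv, rfl⟩
  · exact Or.inl (mul_zero _)
  exact Or.inr ⟨u * v, mul_mem hu hv, Units.val_mul u v⟩

lemma neg_mem_carrier (hx : x ∈ P.carrier) : -x ∈ P.carrier := by
  rcases hx with rfl | ⟨u, hu, rfl⟩
  · exact Or.inl neg_zero
  exact Or.inr ⟨-1 * u, mul_mem P.neg_one_mem hu, by simp⟩

lemma eq_zero_or_eq_zero_of_mul_eq_zero (hx : x ∈ P.carrier) (hxy : x * y = 0) : x = 0 ∨ y = 0 := by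
  rcases hx with rfl | ⟨u, -, rfl⟩
  · exact Or.inl rfl
  exact Or.inr ((Units.mul_right_eq_zero u).mp hxy)

end PartialField

lemma _root_.Matrix.det_eq_of_forall_eq_or_eq {ι R : Type*} [Fintype ι] [DecidableEq ι] [CommRing R]
    {u v : ι} (huv : u ≠ v) (huniv : ∀ z, z = u ∨ z = v) (N : Matrix ι ι R) :
    N.det = N u u * N v v - N u v * N v u := by
  let f : Fin 2 ≃ ι := Equiv.ofBijective ![u, v] ⟨fun i j hij => by
      fin_cases i <;> fin_cases j <;> simp_all [eq_comm],
    fun z => (huniv z).elim (fun h => ⟨0, h.symm⟩) (fun h => ⟨1, h.symm⟩)⟩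
  rw [← N.det_submatrix_equiv_self f, Matrix.det_fin_two]
  rfl

lemma subdet_of_coe_eq_singleton (P : PartialField) (A : α → α → P.R) {u v : α}
    {Xz Yz : Finset α} (hX : (Xz : Set α) = {u}) (hY : (Yz : Set α) = {v})
    (e : {x // x ∈ Xz} ≃ {y // y ∈ Yz}) : subdet P A Xz Yz e = A u v := by
  obtain rfl := Finset.coe_eq_singleton.mp hX
  obtain rfl := Finset.coe_eq_singleton.mp hY
  simp [subdet, Matrix.det_unique, Finset.mem_singleton.mp (e default).2]

lemma subdet_of_coe_eq_pair (P : PartialField) (A : α → α → P.R) {u v s t : α} (huv : u ≠ v)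
    {Xz Yz : Finset α} (hX : (Xz : Set α) = {u, v}) (hY : (Yz : Set α) = {s, t})
    (e : {x // x ∈ Xz} ≃ {y // y ∈ Yz}) :
    subdet P A Xz Yz e = A u s * A v t - A u t * A v s ∨
      subdet P A Xz Yz e = -(A u s * A v t - A u t * A v s) := by
  have hu : u ∈ Xz := by simp [← Finset.mem_coe, hX]
  have hv : v ∈ Xz := by simp [← Finset.mem_coe, hX]
  have hcol : ∀ z : {y // y ∈ Yz}, (z : α) = s ∨ (z : α) = t := fun z => by
    simpa [hY] using Finset.mem_coe.mpr z.2
  have hne : (e ⟨u, hu⟩ : α) ≠ e ⟨v, hv⟩ := fun h =>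
    huv (by simpa using e.injective (Subtype.ext h))
  simp only [subdet]
  rw [@Matrix.det_eq_of_forall_eq_or_eq _ _ _ (Classical.decEq _) _ ⟨u, hu⟩ ⟨v, hv⟩
    (by simpa using huv) (fun z => by simpa [hX, Subtype.ext_iff] using Finset.mem_coe.mpr z.2)]
  simp only [Matrix.of_apply]
  rcases hcol (e ⟨u, hu⟩) with h1 | h1 <;> rcases hcol (e ⟨v, hv⟩) with h2 | h2 <;>
    rw [h1, h2] at hne ⊢
  exacts [absurd rfl hne, Or.inl rfl, Or.inr (by ring), absurd rfl hne]

lemma IsPMatrix.entry_mem_carrier {P : PartialField} {X Y : Set α} {A : α → α → P.R}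
    (hA : IsPMatrix P X Y A) {i j : α} (hi : i ∈ X) (hj : j ∈ Y) : A i j ∈ P.carrier := by
  simpa [subdet_of_coe_eq_singleton P A (Finset.coe_singleton i) (Finset.coe_singleton j)] using
    hA {i} {j} (by simpa using hi) (by simpa using hj) (Equiv.ofUnique _ _)

lemma _root_.Matroid.IsBase.rev_exchange {M : Matroid α} {B₁ B₂ : Set α} {e : α}
    (hB₁ : M.IsBase B₁) (hB₂ : M.IsBase B₂) (he : e ∈ B₁ \ B₂) :
    ∃ f ∈ B₂ \ B₁, M.IsBase (insert e (B₂ \ {f})) := by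
  have heE := hB₁.subset_ground he.1
  obtain ⟨f, ⟨⟨hfE, hfB₁⟩, hf_compl⟩, hf⟩ := hB₂.compl_isBase_dual.exchange hB₁.compl_isBase_dual
    (e := e) ⟨⟨heE, he.2⟩, fun h => h.2 he.1⟩
  have hfB₂ : f ∈ B₂ := by simpa [hfE] using hf_compl
  refine ⟨f, ⟨hfB₂, hfB₁⟩, ?_⟩
  convert hf.compl_isBase_of_dual using 1
  ext z
  have hzE : z ∈ B₂ → z ∈ M.E := fun h => hB₂.subset_ground h
  simp only [mem_sdiff, mem_insert_iff, mem_singleton_iff]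
  grind

lemma symmDiff_eq_insert_insert_sdiff_pair {B Z : Set α} {a b x y : α} (hBZ : B ∩ Z = {x, y})
    (hZB : Z \ B = {a, b}) : symmDiff B Z = insert a (insert b (B \ {x, y})) := by
  rw [Set.symmDiff_def, ← sdiff_self_inter, hBZ, hZB, union_comm, insert_union, singleton_union]

lemma _root_.Matroid.IsBase.exchanges_of_isBase_insert_insert_sdiff_pair {M : Matroid α}
    {B : Set α} {a b x y : α} (hB : M.IsBase B) (hx : x ∈ B) (haB : a ∉ B) (hbB : b ∉ B)
    (hB' : M.IsBase (insert a (insert b (B \ {x, y})))) :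
    (M.IsBase (insert a (B \ {x})) ∨ M.IsBase (insert b (B \ {x}))) ∧
      (M.IsBase (insert a (B \ {x})) ∨ M.IsBase (insert a (B \ {y}))) := by
  constructor
  · obtain ⟨f, ⟨hfB', hfB⟩, hf⟩ := hB.exchange hB' (e := x) ⟨hx, by grind⟩
    obtain rfl | rfl : f = a ∨ f = b := by grind
    exacts [Or.inl hf, Or.inr hf]
  · obtain ⟨g, ⟨hgB, hgB'⟩, hg⟩ := hB'.rev_exchange hB (e := a) ⟨mem_insert a _, haB⟩
    obtain rfl | rfl : g = x ∨ g = y := by grind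
    exacts [Or.inl hg, Or.inr hg]

lemma isBase_del_iff {M : Matroid α} {B D S : Set α} (hB : M.IsBase B) (hBD : Disjoint B D) :
    (del M D).IsBase S ↔ M.IsBase S ∧ Disjoint S D := by
  rw [del, (hB.spanning_of_superset (subset_sdiff.mpr ⟨hB.subset_ground, hBD⟩)).isBase_restrict_iff,
    subset_sdiff, and_congr_right_iff]
  exact fun hS => and_iff_right hS.subset_ground

lemma _root_.Matroid.IsBase.indep_insert_insert_sdiff_pair {M : Matroid α} {B : Set α}
    {a b x y : α} (hB : M.IsBase B) (hx : x ∈ B) (haE : a ∈ M.E) (haB : a ∉ B) (hbB : b ∉ B)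
    (hbx : M.IsBase (insert b (B \ {x}))) (hay : M.IsBase (insert a (B \ {y})))
    (hax : ¬ M.IsBase (insert a (B \ {x}))) :
    M.Indep (insert a (insert b (B \ {x, y}))) := by
  have ha_cl_x : a ∈ M.closure (B \ {x}) :=
    by_contra fun h => hax (hB.exchange_base_of_notMem_closure hx h)
  have hb_cl_x : b ∉ M.closure (B \ {x}) :=
    ((hB.indep.sdiff _).insert_indep_iff_of_notMem (fun h => hbB h.1)).mp hbx.indep |>.2
  have ha_cl_y : a ∉ M.closure (B \ {y}) :=
    ((hB.indep.sdiff _).insert_indep_iff_of_notMem (fun h => haB h.1)).mp hay.indep |>.2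
  have hI : M.Indep (insert a (B \ {x, y})) := by
    rw [(hB.indep.sdiff _).insert_indep_iff_of_notMem (fun h => haB h.1)]
    exact ⟨haE, fun h => ha_cl_y (M.closure_subset_closure (sdiff_subset_sdiff_right (by simp)) h)⟩
  have hcl : M.closure (insert a (B \ {x, y})) ⊆ M.closure (B \ {x}) := by
    refine M.closure_subset_closure_of_subset_closure (insert_subset ha_cl_x ?_)
    exact (sdiff_subset_sdiff_right (by simp)).trans
      (M.subset_closure _ (sdiff_subset.trans hB.subset_ground))
  rw [insert_comm, hI.insert_indep_iff]
  exact Or.inl ⟨hbx.subset_ground (mem_insert _ _), fun h => hb_cl_x (hcl h)⟩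

lemma Represents.isBase_insert_sdiff_iff {P : PartialField} {X Y : Set α} {A : α → α → P.R}
    {N : Matroid α} (h : Represents P X Y A N) {i j : α} (hi : i ∈ X) (hj : j ∈ Y) :
    N.IsBase (insert j (X \ {i})) ↔ A i j ≠ 0 := by
  have hjX : j ∉ X := h.1.notMem_of_mem_right hj
  have hiY : i ∉ Y := h.1.notMem_of_mem_left hi
  have hXZ : X ∩ {i, j} = {i} := by ext; grind
  have hYZ : Y ∩ {i, j} = {j} := by ext; grind
  have hsd : symmDiff X {i, j} = insert j (X \ {i}) := by ext; grind
  rw [← hsd, h.2.2]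
  constructor
  · rintro (h0 | ⟨Z, -, hZ, -, Xz, Yz, e, hXz, hYz, hne⟩)
    · exact (hjX (h0 ▸ hsd ▸ mem_insert j _)).elim
    · obtain rfl := symmDiff_right_injective X hZ
      rwa [subdet_of_coe_eq_singleton P A (hXz.trans hXZ) (hYz.trans hYZ)] at hne
  · intro hne
    refine Or.inr ⟨{i, j}, pair_subset (Or.inl hi) (Or.inr hj), rfl,
      by rw [hXZ, hYZ, encard_singleton, encard_singleton], {i}, {j}, Equiv.ofUnique _ _,
      by rw [Finset.coe_singleton, hXZ], by rw [Finset.coe_singleton, hYZ], ?_⟩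
    rwa [subdet_of_coe_eq_singleton P A (Finset.coe_singleton i) (Finset.coe_singleton j)]

lemma entry_ne_zero_iff_isBase_insert {P : PartialField} {M : Matroid α} {B : Set α}
    {A : α → α → P.R} {i j c : α} (hB : M.IsBase B) (hi : i ∈ B) (hj : j ∈ M.E \ B)
    (hcB : c ∉ B) (hjc : j ≠ c) (hR : Represents P B ((M.E \ B) \ {c}) A (del M {c})) :
    A i j ≠ 0 ↔ M.IsBase (insert j (B \ {i})) := by
  rw [← hR.isBase_insert_sdiff_iff hi ⟨hj, hjc⟩,
    isBase_del_iff hB (disjoint_singleton_right.mpr hcB), and_iff_left]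
  simp [hjc.symm, hcB]

lemma entry_ne_zero_of_incriminates {P : PartialField} {M : Matroid α} {B Z : Set α}
    {A : α → α → P.R} {a b x y : α} (hB : M.IsBase B) (hab : a ≠ b) (hxy : x ≠ y)
    (haB : a ∈ M.E \ B) (hbB : b ∈ M.E \ B) (hx : x ∈ B) (hy : y ∈ B)
    (hPa : IsPMatrix P B ((M.E \ B) \ {a}) A) (hPb : IsPMatrix P B ((M.E \ B) \ {b}) A)
    (hRa : Represents P B ((M.E \ B) \ {a}) A (del M {a}))
    (hRb : Represents P B ((M.E \ B) \ {b}) A (del M {b}))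
    (hBZ : B ∩ Z = {x, y}) (hEZ : (M.E \ B) ∩ Z = {a, b}) (hInc : Incriminates P M B A Z) :
    A x a ≠ 0 := by
  have hxa := entry_ne_zero_iff_isBase_insert hB hx haB hbB.2 hab hRb
  have hxb := entry_ne_zero_iff_isBase_insert hB hx hbB haB.2 hab.symm hRa
  have hya := entry_ne_zero_iff_isBase_insert hB hy haB hbB.2 hab hRb
  have hxb_mem : A x b ∈ P.carrier := hPa.entry_mem_carrier hx ⟨hbB, hab.symm⟩
  have hya_mem : A y a ∈ P.carrier := hPb.entry_mem_carrier hy ⟨haB, hab⟩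
  intro hxa0
  obtain ⟨hZE, Xz, Yz, e, hXz, hYz, hcase⟩ := hInc
  have hdet : subdet P A Xz Yz e = -(A x b * A y a) ∨ subdet P A Xz Yz e = A x b * A y a := by
    rcases subdet_of_coe_eq_pair P A hxy (hXz.trans hBZ) (hYz.trans hEZ) e with h | h <;>
      rw [h, hxa0]
    exacts [Or.inl (by ring), Or.inr (by ring)]
  have hZB : Z \ B = {a, b} := by
    rw [← hEZ, sdiff_inter_right_comm, inter_eq_right.mpr hZE]
  rw [symmDiff_eq_insert_insert_sdiff_pair hBZ hZB] at hcase
  rcases hcase with hnotP | ⟨hzero, hbase⟩ | ⟨hne, hdep⟩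
  · have hprod := PartialField.mul_mem_carrier hxb_mem hya_mem
    rcases hdet with h | h <;> rw [h] at hnotP
    exacts [hnotP (PartialField.neg_mem_carrier hprod), hnotP hprod]
  · have hprod : A x b * A y a = 0 := by
      rcases hdet with h | h <;> rw [h] at hzero
      exacts [neg_eq_zero.mp hzero, hzero]
    obtain ⟨hx_ab, hxy_a⟩ := hB.exchanges_of_isBase_insert_insert_sdiff_pair hx haB.2 hbB.2 hbase
    rcases PartialField.eq_zero_or_eq_zero_of_mul_eq_zero hxb_mem hprod with hxb0 | hya0
    · exact hx_ab.elim (hxa.mpr · hxa0) (hxb.mpr · hxb0)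
    · exact hxy_a.elim (hxa.mpr · hxa0) (hya.mpr · hya0)
  · have hxb0 : A x b ≠ 0 := fun h0 => hne (by rcases hdet with h | h <;> simp [h, h0])
    have hya0 : A y a ≠ 0 := fun h0 => hne (by rcases hdet with h | h <;> simp [h, h0])
    exact hdep.not_indep (hB.indep_insert_insert_sdiff_pair hx haB.1 haB.2 hbB.2
      (hxb.mp hxb0) (hya.mp hya0) (hxa.mpr · hxa0))

theorem statement_5_general (P : PartialField) (M : Matroid α)
    (B : Set α) (hB : M.IsBase B)
    (A : α → α → P.R) (a b x y : α) (hab : a ≠ b)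
    (haB : a ∈ M.E \ B) (hbB : b ∈ M.E \ B) (hx : x ∈ B) (hy : y ∈ B) (hxy : x ≠ y)
    (hPa : IsPMatrix P B ((M.E \ B) \ {a}) A)
    (hPb : IsPMatrix P B ((M.E \ B) \ {b}) A)
    (hRa : Represents P B ((M.E \ B) \ {a}) A (del M {a}))
    (hRb : Represents P B ((M.E \ B) \ {b}) A (del M {b}))
    (hInc : Incriminates P M B A {a, b, x, y}) :
    ∀ i ∈ ({x, y} : Set α), ∀ j ∈ ({a, b} : Set α), A i j ≠ 0 := by
  have hBZ : B ∩ {a, b, x, y} = {x, y} := by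
    ext; grind
  have hEZ : (M.E \ B) ∩ {a, b, x, y} = {a, b} := by
    ext; grind
  have hBZ' := hBZ.trans (pair_comm x y)
  have hEZ' := hEZ.trans (pair_comm a b)
  rintro i (rfl | rfl) j (rfl | rfl)
  · exact entry_ne_zero_of_incriminates hB hab hxy haB hbB hx hy hPa hPb hRa hRb hBZ hEZ hInc
  · exact entry_ne_zero_of_incriminates hB hab.symm hxy hbB haB hx hy hPb hPa hRb hRa hBZ hEZ' hInc
  · exact entry_ne_zero_of_incriminates hB hab hxy.symm haB hbB hy hx hPa hPb hRa hRb hBZ' hEZ hInc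
  · exact entry_ne_zero_of_incriminates hB hab.symm hxy.symm hbB haB hy hx hPb hPa hRb hRa hBZ'
      hEZ' hInc

/-- Lemma 2.21: the bad submatrix has no zero entries. -/
theorem statement_5 (P : PartialField) (M : Matroid α) (hMfin : M.Finite)
    (B : Set α) (hB : M.IsBase B)
    (A : α → α → P.R) (a b x y : α) (hab : a ≠ b)
    (haB : a ∈ M.E \ B) (hbB : b ∈ M.E \ B) (hx : x ∈ B) (hy : y ∈ B) (hxy : x ≠ y)
    (hPa : IsPMatrix P B ((M.E \ B) \ {a}) A)
    (hPb : IsPMatrix P B ((M.E \ B) \ {b}) A)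
    (hRa : Represents P B ((M.E \ B) \ {a}) A (del M {a}))
    (hRb : Represents P B ((M.E \ B) \ {b}) A (del M {b}))
    (hInc : Incriminates P M B A {a, b, x, y}) :
    ∀ i ∈ ({x, y} : Set α), ∀ j ∈ ({a, b} : Set α), A i j ≠ 0 :=
  statement_5_general P M B hB A a b x y hab haB hbB hx hy hxy hPa hPb hRa hRb hInc

end ExcludedMinorsFragile
end

section
/- Assume the Setup, and let M' = M∖{a,b}. Let u be an (N,B)-strong element of M' such that u ∉ {x,y}, and let S be an unstable series pair of M'∖u. Then S ∩ B ⊆ {x,y}. -/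
open Set Matroid

namespace ExcludedMinorsFragile

variable {α : Type*}

variable {α : Type*}

/-!
Suppose `z ∈ S ∩ B` lies outside `{x, y}` and write `S = {z, w}`. If, say, `a ∈ cl(S)`, then `a`
lies in the closure of `I ∪ {w}` with `I = B - {x, y}`, and this alone forces the `2 × 2` minor `D`
of `A` on rows `x, y` and columns `a, b` to be an element of `P` that vanishes exactly when
`I ∪ {a, b}` is dependent; so `{a, b, x, y}` does not incriminate `(M, A)`.

If `a ∈ cl(I)`, the column of `a` vanishes on the rows `x, y`. Otherwise `a` and `w` span the same
line over `I`, and `w` avoids `cl(B - x)` or `cl(B - y)`, say the first, because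
`cl(I) = cl(B - x) ∩ cl(B - y)`. Then `D` is a nonzero element of `P` times a minor of the
`P`-matrix `A - a`: the entry `A y b` when `w = x`, and the minor on rows `x, y` and columns `w, b`
when `w ∉ B`.
-/

namespace PartialField

variable (P : PartialField)

lemma zero_mem_carrier : (0 : P.R) ∈ P.carrier := Or.inl rfl

lemma one_mem_carrier : (1 : P.R) ∈ P.carrier := Or.inr ⟨1, P.G.one_mem, rfl⟩

variable {P}

lemma neg_mem_carrier_s9 {r : P.R} (hr : r ∈ P.carrier) : -r ∈ P.carrier := by
  rcases hr with rfl | ⟨g, hg, rfl⟩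
  · exact Or.inl neg_zero
  · exact Or.inr ⟨-g, by simpa using P.G.mul_mem P.neg_one_mem hg, by simp⟩

@[simp]
lemma neg_mem_carrier_iff {r : P.R} : -r ∈ P.carrier ↔ r ∈ P.carrier :=
  ⟨fun h => by simpa using neg_mem_carrier_s9 h, neg_mem_carrier_s9⟩

lemma exists_unit_of_mem_carrier {r : P.R} (hr : r ∈ P.carrier) (hr0 : r ≠ 0) :
    ∃ g ∈ P.G, (g : P.R) = r :=
  hr.resolve_left hr0

lemma mem_carrier_and_eq_zero_iff_of_mul_eq {D c a d : P.R} (hc : c ∈ P.carrier) (hc0 : c ≠ 0)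
    (ha : a ∈ P.carrier) (ha0 : a ≠ 0) (hd : d ∈ P.carrier) (h : D * c = a * d) :
    D ∈ P.carrier ∧ (D = 0 ↔ d = 0) := by
  obtain ⟨g, hg, rfl⟩ := exists_unit_of_mem_carrier hc hc0
  obtain ⟨k, hk, rfl⟩ := exists_unit_of_mem_carrier ha ha0
  have hD : D = ((k * g⁻¹ : P.Rˣ) : P.R) * d := by
    rw [← Units.eq_mul_inv_iff_mul_eq] at h
    rw [h]; push_cast; ring
  refine ⟨?_, by rw [hD, Units.mul_right_eq_zero]⟩
  rcases hd with rfl | ⟨t, ht, rfl⟩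
  · rw [hD, mul_zero]; exact Or.inl rfl
  · refine Or.inr ⟨k * g⁻¹ * t, P.G.mul_mem (P.G.mul_mem hk (P.G.inv_mem hg)) ht, ?_⟩
    rw [hD]; push_cast; rfl

end PartialField

def minor2 {R : Type*} [CommRing R] (A : α → α → R) (r s c d : α) : R :=
  A r c * A s d - A r d * A s c

lemma minor2_swap_rows {R : Type*} [CommRing R] (A : α → α → R) (r s c d : α) :
    minor2 A s r c d = -minor2 A r s c d := by
  unfold minor2; ring

section Subdet

variable {P : PartialField} {A : α → α → P.R} {Xz Yz : Finset α}

lemma subdet_eq_of_coe_eq_singleton {r c : α} (hX : (Xz : Set α) = {r}) (hY : (Yz : Set α) = {c})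
    (e : {x // x ∈ Xz} ≃ {y // y ∈ Yz}) : subdet P A Xz Yz e = A r c := by
  let φ := (Xz.equivFinOfCardEq (n := 1) (by simp [Finset.coe_eq_singleton.mp hX])).symm
  have hrow : ((φ 0 : {x // x ∈ Xz}) : α) = r := by
    simpa [hX] using Finset.mem_coe.mpr (φ 0).2
  have hcol : ((e (φ 0) : {y // y ∈ Yz}) : α) = c := by
    simpa [hY] using Finset.mem_coe.mpr (e (φ 0)).2
  unfold subdet
  let : DecidableEq {x // x ∈ Xz} := Classical.decEq _
  rw [← Matrix.det_submatrix_equiv_self φ, Matrix.det_fin_one]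
  simp [hrow, hcol]

lemma subdet_eq_minor2_or_neg {r s c d : α} (hrs : r ≠ s)
    (hX : (Xz : Set α) = {r, s}) (hY : (Yz : Set α) = {c, d})
    (e : {x // x ∈ Xz} ≃ {y // y ∈ Yz}) :
    subdet P A Xz Yz e = minor2 A r s c d ∨ subdet P A Xz Yz e = -minor2 A r s c d := by
  have hcard : Xz.card = 2 := by
    classical
    rw [Finset.coe_inj.mp (hX.trans Finset.coe_pair.symm), Finset.card_pair hrs]
  let φ := (Xz.equivFinOfCardEq hcard).symm
  have hrow (i : Fin 2) :
      ((φ i : {x // x ∈ Xz}) : α) = r ∨ ((φ i : {x // x ∈ Xz}) : α) = s := by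
    simpa [hX] using Finset.mem_coe.mpr (φ i).2
  have hcol (i : Fin 2) :
      ((e (φ i) : {y // y ∈ Yz}) : α) = c ∨ ((e (φ i) : {y // y ∈ Yz}) : α) = d := by
    simpa [hY] using Finset.mem_coe.mpr (e (φ i)).2
  have hrow01 : ((φ 0 : {x // x ∈ Xz}) : α) ≠ φ 1 := fun h => by
    simpa using φ.injective (Subtype.ext h)
  have hcol01 : ((e (φ 0) : {y // y ∈ Yz}) : α) ≠ e (φ 1) := fun h => by
    simpa using φ.injective (e.injective (Subtype.ext h))
  unfold subdet
  let : DecidableEq {x // x ∈ Xz} := Classical.decEq _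
  rw [← Matrix.det_submatrix_equiv_self φ, Matrix.det_fin_two]
  simp only [Matrix.submatrix_apply, Matrix.of_apply, minor2]
  rcases hrow 0 with h0 | h0 <;> rcases hrow 1 with h1 | h1 <;>
    rcases hcol 0 with k0 | k0 <;> rcases hcol 1 with k1 | k1 <;>
    simp_all only [ne_eq, not_true_eq_false, not_false_eq_true, true_or] <;>
    first | (left; ring1) | (right; ring1)

variable {X Y Z : Set α}

lemma nonzeroSubdet_iff_of_inter_eq_singleton {r c : α} (hX : X ∩ Z = {r}) (hY : Y ∩ Z = {c}) :
    NonzeroSubdet P A X Y Z ↔ A r c ≠ 0 := by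
  constructor
  · rintro ⟨Xz, Yz, e, hXz, hYz, hne⟩
    rwa [subdet_eq_of_coe_eq_singleton (hXz.trans hX) (hYz.trans hY)] at hne
  · intro h
    exact ⟨{r}, {c}, Finset.equivOfCardEq rfl, by simp [hX], by simp [hY],
      by rwa [subdet_eq_of_coe_eq_singleton (Finset.coe_singleton r) (Finset.coe_singleton c)]⟩

lemma nonzeroSubdet_iff_of_inter_eq_pair {r s c d : α} (hrs : r ≠ s) (hcd : c ≠ d)
    (hX : X ∩ Z = {r, s}) (hY : Y ∩ Z = {c, d}) :
    NonzeroSubdet P A X Y Z ↔ minor2 A r s c d ≠ 0 := by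
  classical
  constructor
  · rintro ⟨Xz, Yz, e, hXz, hYz, hne⟩
    rcases subdet_eq_minor2_or_neg hrs (hXz.trans hX) (hYz.trans hY) e with h | h
    · rwa [h] at hne
    · rwa [h, neg_ne_zero] at hne
  · intro h
    let e : ({r, s} : Finset α) ≃ ({c, d} : Finset α) :=
      Finset.equivOfCardEq (by rw [Finset.card_pair hrs, Finset.card_pair hcd])
    refine ⟨{r, s}, {c, d}, e, by simp [hX], by simp [hY], ?_⟩
    rcases subdet_eq_minor2_or_neg (A := A) hrs (Finset.coe_pair (a := r) (b := s))
      (Finset.coe_pair (a := c) (b := d)) e with h' | h'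
    · rwa [h']
    · rwa [h', neg_ne_zero]

lemma IsPMatrix.entry_mem {r c : α} (hA : IsPMatrix P X Y A) (hr : r ∈ X) (hc : c ∈ Y) :
    A r c ∈ P.carrier := by
  simpa [subdet_eq_of_coe_eq_singleton] using
    hA {r} {c} (by simpa) (by simpa) (Finset.equivOfCardEq rfl)

lemma IsPMatrix.minor2_mem {r s c d : α} (hA : IsPMatrix P X Y A) (hr : r ∈ X) (hs : s ∈ X)
    (hrs : r ≠ s) (hc : c ∈ Y) (hd : d ∈ Y) (hcd : c ≠ d) :
    minor2 A r s c d ∈ P.carrier := by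
  classical
  let e : ({r, s} : Finset α) ≃ ({c, d} : Finset α) :=
    Finset.equivOfCardEq (by rw [Finset.card_pair hrs, Finset.card_pair hcd])
  have h := hA {r, s} {c, d} (by simp [Set.insert_subset_iff, hr, hs])
    (by simp [Set.insert_subset_iff, hc, hd]) e
  rcases subdet_eq_minor2_or_neg (A := A) hrs (Finset.coe_pair (a := r) (b := s))
      (Finset.coe_pair (a := c) (b := d)) e with h' | h'
  · rwa [h'] at h
  · rwa [h', PartialField.neg_mem_carrier_iff] at h

end Subdet

lemma _root_.Matroid.IsBase.isBase_of_indep_of_encard_le {M : Matroid α} [M.RankFinite]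
    {B J : Set α} (hB : M.IsBase B) (hJ : M.Indep J) (h : B.encard ≤ J.encard) : M.IsBase J := by
  obtain ⟨B', hB', hJB'⟩ := hJ.exists_isBase_superset
  rwa [hB'.finite.eq_of_subset_of_encard_le' hJB' (by rwa [hB'.encard_eq_encard_of_isBase hB])]

namespace Represents

variable {P : PartialField} {A : α → α → P.R} {X Y : Set α} {Q : Matroid α}

lemma isBase (rep : Represents P X Y A Q) : Q.IsBase X :=
  (rep.2.2 X).mpr (Or.inl rfl)

lemma isBase_symmDiff_iff (rep : Represents P X Y A Q) {Z : Set α} (hZ : Z ⊆ X ∪ Y)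
    (hne : Z.Nonempty) (hcard : (X ∩ Z).encard = (Y ∩ Z).encard) :
    Q.IsBase (symmDiff X Z) ↔ NonzeroSubdet P A X Y Z := by
  rw [rep.2.2]
  refine ⟨?_, fun h => Or.inr ⟨Z, hZ, rfl, hcard, h⟩⟩
  rintro (h | ⟨Z', -, hZ', -, hnz⟩)
  · rw [symmDiff_eq_left] at h
    exact absurd h hne.ne_empty
  · rwa [symmDiff_right_injective X hZ']

lemma indep_insert_sdiff_iff (rep : Represents P X Y A Q) {r c : α} (hr : r ∈ X) (hc : c ∈ Y) :
    Q.Indep (insert c (X \ {r})) ↔ A r c ≠ 0 := by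
  have hcX : c ∉ X := rep.1.notMem_of_mem_right hc
  have hrY : r ∉ Y := rep.1.notMem_of_mem_left hr
  have hXZ : X ∩ {r, c} = {r} := by
    ext t; simp only [Set.mem_inter_iff, Set.mem_insert_iff, Set.mem_singleton_iff]; grind
  have hYZ : Y ∩ {r, c} = {c} := by
    ext t; simp only [Set.mem_inter_iff, Set.mem_insert_iff, Set.mem_singleton_iff]; grind
  have hsd : symmDiff X {r, c} = insert c (X \ {r}) := by
    ext t
    simp only [Set.mem_symmDiff, Set.mem_insert_iff, Set.mem_singleton_iff, Set.mem_sdiff]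
    grind
  rw [← nonzeroSubdet_iff_of_inter_eq_singleton hXZ hYZ, ← rep.isBase_symmDiff_iff
    (by simp [Set.insert_subset_iff, hr, hc]) (by simp) (by rw [hXZ, hYZ]; simp), hsd]
  exact ⟨rep.isBase.exchange_isBase_of_indep hcX, Matroid.IsBase.indep⟩

lemma indep_insert_insert_sdiff_iff [Q.RankFinite] (rep : Represents P X Y A Q) {r s c d : α}
    (hr : r ∈ X) (hs : s ∈ X) (hrs : r ≠ s) (hc : c ∈ Y) (hd : d ∈ Y) (hcd : c ≠ d) :
    Q.Indep (insert c (insert d (X \ {r, s}))) ↔ minor2 A r s c d ≠ 0 := by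
  have hcX : c ∉ X := rep.1.notMem_of_mem_right hc
  have hdX : d ∉ X := rep.1.notMem_of_mem_right hd
  have hrY : r ∉ Y := rep.1.notMem_of_mem_left hr
  have hsY : s ∉ Y := rep.1.notMem_of_mem_left hs
  have hXZ : X ∩ {r, s, c, d} = {r, s} := by
    ext t; simp only [Set.mem_inter_iff, Set.mem_insert_iff, Set.mem_singleton_iff]; grind
  have hYZ : Y ∩ {r, s, c, d} = {c, d} := by
    ext t; simp only [Set.mem_inter_iff, Set.mem_insert_iff, Set.mem_singleton_iff]; grind
  have hsd : symmDiff X {r, s, c, d} = insert c (insert d (X \ {r, s})) := by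
    ext t
    simp only [Set.mem_symmDiff, Set.mem_insert_iff, Set.mem_singleton_iff, Set.mem_sdiff]
    grind
  have hcard : (insert c (insert d (X \ {r, s}))).encard = X.encard := by
    have h : insert c (insert d (X \ {r, s})) = insert c ((insert d (X \ {s})) \ {r}) := by
      ext t; simp only [Set.mem_insert_iff, Set.mem_singleton_iff, Set.mem_sdiff]; grind
    rw [h, Set.encard_exchange (by grind) (by grind), Set.encard_exchange hdX hs]
  rw [← nonzeroSubdet_iff_of_inter_eq_pair hrs hcd hXZ hYZ, ← rep.isBase_symmDiff_iff
    (by simp [Set.insert_subset_iff, hr, hs, hc, hd]) (by simp)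
    (by rw [hXZ, hYZ, Set.encard_pair hrs, Set.encard_pair hcd]), hsd]
  exact ⟨fun h => rep.isBase.isBase_of_indep_of_encard_le h hcard.ge, Matroid.IsBase.indep⟩

end Represents

section Companion

variable {P : PartialField} {M : Matroid α} {A : α → α → P.R} {B D : Set α} {b r s c d : α}

lemma del_indep_iff {I : Set α} : (del M D).Indep I ↔ M.Indep I ∧ I ⊆ M.E \ D :=
  Matroid.restrict_indep_iff

instance [M.RankFinite] : (del M D).RankFinite := Matroid.restrict_rankFinite _

lemma Represents.subset_ground_sdiff (rep : Represents P B ((M.E \ B) \ {b}) A (del M {b})) :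
    B ⊆ M.E \ {b} :=
  rep.isBase.subset_ground

lemma Represents.indep_of_del (rep : Represents P B ((M.E \ B) \ {b}) A (del M {b})) :
    M.Indep B :=
  (del_indep_iff.mp rep.isBase.indep).1

lemma Represents.entry_ne_zero_iff_indep (rep : Represents P B ((M.E \ B) \ {b}) A (del M {b}))
    (hr : r ∈ B) (hc : c ∈ (M.E \ B) \ {b}) : A r c ≠ 0 ↔ M.Indep (insert c (B \ {r})) := by
  rw [← rep.indep_insert_sdiff_iff hr hc, del_indep_iff, and_iff_left]
  exact Set.insert_subset ⟨hc.1.1, hc.2⟩ (Set.sdiff_subset.trans rep.subset_ground_sdiff)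

lemma Represents.entry_eq_zero_iff_mem_closure
    (rep : Represents P B ((M.E \ B) \ {b}) A (del M {b}))
    (hr : r ∈ B) (hc : c ∈ (M.E \ B) \ {b}) : A r c = 0 ↔ c ∈ M.closure (B \ {r}) := by
  rw [← not_iff_not, ← ne_eq, rep.entry_ne_zero_iff_indep hr hc,
    (rep.indep_of_del.subset Set.sdiff_subset).insert_indep_iff_of_notMem (fun h => hc.1.2 h.1)]
  exact ⟨fun h => h.2, fun h => ⟨hc.1.1, h⟩⟩

lemma Represents.minor2_ne_zero_iff_indep [M.RankFinite]
    (rep : Represents P B ((M.E \ B) \ {b}) A (del M {b})) (hr : r ∈ B) (hs : s ∈ B)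
    (hrs : r ≠ s) (hc : c ∈ (M.E \ B) \ {b}) (hd : d ∈ (M.E \ B) \ {b}) (hcd : c ≠ d) :
    minor2 A r s c d ≠ 0 ↔ M.Indep (insert c (insert d (B \ {r, s}))) := by
  rw [← rep.indep_insert_insert_sdiff_iff hr hs hrs hc hd hcd, del_indep_iff, and_iff_left]
  exact Set.insert_subset ⟨hc.1.1, hc.2⟩ (Set.insert_subset ⟨hd.1.1, hd.2⟩
    (Set.sdiff_subset.trans rep.subset_ground_sdiff))

end Companion

lemma _root_.Matroid.not_indep_insert_of_mem_closure {M : Matroid α} {J K : Set α} {e : α}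
    (he : e ∈ M.closure J) (heJ : e ∉ J) (hJK : J ⊆ K) : ¬ M.Indep (insert e K) := by
  intro h
  refine h.notMem_closure_sdiff_of_mem (Set.mem_insert e K) (M.closure_mono ?_ he)
  exact fun t ht => ⟨Set.mem_insert_of_mem e (hJK ht), fun hte => heJ (hte ▸ ht)⟩

lemma _root_.Matroid.indep_insert_iff_of_closure_eq {M : Matroid α} {J J' : Set α} {e : α}
    (hJ : M.Indep J) (hJ' : M.Indep J') (hcl : M.closure J = M.closure J') (heJ : e ∉ J)
    (heJ' : e ∉ J') :
    M.Indep (insert e J) ↔ M.Indep (insert e J') := by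
  rw [hJ.insert_indep_iff_of_notMem heJ, hJ'.insert_indep_iff_of_notMem heJ', hcl]

section Core

variable {P : PartialField} {M : Matroid α} {A : α → α → P.R} {B : Set α} {a b x y w : α}

lemma minor2_eq_zero_of_mem_closure (repb : Represents P B ((M.E \ B) \ {b}) A (del M {b}))
    (ha : a ∈ (M.E \ B) \ {b}) (hx : x ∈ B) (hy : y ∈ B)
    (haI : a ∈ M.closure (B \ {x, y})) : minor2 A x y a b = 0 := by
  have hxa : A x a = 0 := (repb.entry_eq_zero_iff_mem_closure hx ha).mpr
    (M.closure_mono (Set.sdiff_subset_sdiff_right (by simp)) haI)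
  have hya : A y a = 0 := (repb.entry_eq_zero_iff_mem_closure hy ha).mpr
    (M.closure_mono (Set.sdiff_subset_sdiff_right (by simp)) haI)
  simp [minor2, hxa, hya]

lemma exists_minor2_mul_eq_mul [M.RankFinite]
    (pma : IsPMatrix P B ((M.E \ B) \ {a}) A)
    (repa : Represents P B ((M.E \ B) \ {a}) A (del M {a}))
    (pmb : IsPMatrix P B ((M.E \ B) \ {b}) A)
    (repb : Represents P B ((M.E \ B) \ {b}) A (del M {b}))
    (ha : a ∈ (M.E \ B) \ {b}) (hb : b ∈ (M.E \ B) \ {a}) (hx : x ∈ B) (hy : y ∈ B)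
    (hxy : x ≠ y) (hw : w ∈ M.E) (hwa : w ≠ a) (hwb : w ≠ b)
    (hacl : a ∈ M.closure (insert w (B \ {x, y}))) (hwx : w ∉ M.closure (B \ {x}))
    (hxa : A x a ≠ 0) :
    ∃ c d : P.R, c ∈ P.carrier ∧ c ≠ 0 ∧ d ∈ P.carrier ∧
      (d ≠ 0 ↔ M.Indep (insert b (insert w (B \ {x, y})))) ∧
      minor2 A x y a b * c = A x a * d := by
  by_cases hwB : w ∈ B
  · obtain rfl : x = w := by
      by_contra h
      exact hwx (M.subset_closure _ (Set.sdiff_subset.trans repb.indep_of_del.subset_ground)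
        ⟨hwB, Ne.symm h⟩)
    have hxI : insert x (B \ {x, y}) = B \ {y} := by
      ext t; simp only [Set.mem_insert_iff, Set.mem_sdiff, Set.mem_singleton_iff]; grind
    have hya : A y a = 0 := (repb.entry_eq_zero_iff_mem_closure hy ha).mpr (hxI ▸ hacl)
    refine ⟨1, A y b, P.one_mem_carrier, fun h => hxa ?_, pma.entry_mem hy hb, ?_, ?_⟩
    · rw [← mul_one (A x a), h, mul_zero]
    · rw [repa.entry_ne_zero_iff_indep hy hb, hxI]
    · simp [minor2, hya]
  have hwb' : w ∈ (M.E \ B) \ {b} := ⟨⟨hw, hwB⟩, hwb⟩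
  have hwa' : w ∈ (M.E \ B) \ {a} := ⟨⟨hw, hwB⟩, hwa⟩
  -- the columns `w` and `a` of `A` are proportional on the rows `x, y`
  have hF : minor2 A x y w a = 0 := by
    by_contra h
    rw [← ne_eq, repb.minor2_ne_zero_iff_indep hx hy hxy hwb' ha hwa, Set.insert_comm] at h
    refine not_indep_insert_of_mem_closure hacl ?_ subset_rfl h
    rintro (h | h)
    exacts [hwa h.symm, ha.1.2 h.1]
  refine ⟨A x w, minor2 A x y w b, pmb.entry_mem hx hwb', ?_,
    pma.minor2_mem hx hy hxy hwa' hb hwb, ?_, ?_⟩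
  · rwa [Ne, repb.entry_eq_zero_iff_mem_closure hx hwb']
  · rw [repa.minor2_ne_zero_iff_indep hx hy hxy hwa' hb hwb, Set.insert_comm]
  · unfold minor2 at hF ⊢
    linear_combination (-A x b) * hF

lemma minor2_mem_and_eq_zero_iff_of_notMem_closure [M.RankFinite]
    (pma : IsPMatrix P B ((M.E \ B) \ {a}) A)
    (repa : Represents P B ((M.E \ B) \ {a}) A (del M {a}))
    (pmb : IsPMatrix P B ((M.E \ B) \ {b}) A)
    (repb : Represents P B ((M.E \ B) \ {b}) A (del M {b}))
    (ha : a ∈ (M.E \ B) \ {b}) (hb : b ∈ (M.E \ B) \ {a}) (hx : x ∈ B) (hy : y ∈ B)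
    (hxy : x ≠ y) (hw : w ∈ M.E) (hwa : w ≠ a) (hwb : w ≠ b)
    (hacl : a ∈ M.closure (insert w (B \ {x, y}))) (haI : a ∉ M.closure (B \ {x, y}))
    (hwx : w ∉ M.closure (B \ {x})) :
    minor2 A x y a b ∈ P.carrier ∧
      (minor2 A x y a b = 0 ↔ ¬ M.Indep (insert a (insert b (B \ {x, y})))) := by
  set I := B \ {x, y}
  have hB := repb.indep_of_del
  have hI := hB.subset (Set.sdiff_subset : I ⊆ B)
  have hcl : M.closure (insert a I) = M.closure (insert w I) :=
    M.closure_insert_congr ⟨hacl, haI⟩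
  have hwI : w ∉ M.closure I := (M.closure_exchange ⟨hacl, haI⟩).2
  have hexch : M.Indep (insert a (insert b I)) ↔ M.Indep (insert b (insert w I)) := by
    rw [Set.insert_comm]
    refine indep_insert_iff_of_closure_eq
      ((hI.insert_indep_iff_of_notMem fun h => ha.1.2 h.1).mpr ⟨ha.1.1, haI⟩)
      ((hI.insert_indep_iff_of_notMem fun h => hwI (M.subset_closure I hI.subset_ground h)).mpr
        ⟨hw, hwI⟩) hcl ?_ ?_ <;>
    rintro (h | h)
    exacts [hb.2 h, hb.1.2 h.1, hwb h.symm, hb.1.2 h.1]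
  have hxa : A x a ≠ 0 := by
    rw [Ne, repb.entry_eq_zero_iff_mem_closure hx ha]
    refine fun h => hwx (M.closure_subset_closure_of_subset_closure (X := insert a I) ?_ ?_)
    · exact Set.insert_subset h ((Set.sdiff_subset_sdiff_right (by simp)).trans
        (M.subset_closure _ (Set.sdiff_subset.trans hB.subset_ground)))
    · exact hcl ▸ M.mem_closure_of_mem' (Set.mem_insert w I) hw
  obtain ⟨c, d, hc, hc0, hd, hd0, hmul⟩ :=
    exists_minor2_mul_eq_mul pma repa pmb repb ha hb hx hy hxy hw hwa hwb hacl hwx hxa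
  obtain ⟨hmem, hzero⟩ := PartialField.mem_carrier_and_eq_zero_iff_of_mul_eq hc hc0
    (pmb.entry_mem hx ha) hxa hd hmul
  exact ⟨hmem, by rw [hzero, hexch, ← hd0, not_not]⟩

lemma minor2_mem_and_eq_zero_iff_of_mem_closure [M.RankFinite]
    (pma : IsPMatrix P B ((M.E \ B) \ {a}) A)
    (repa : Represents P B ((M.E \ B) \ {a}) A (del M {a}))
    (pmb : IsPMatrix P B ((M.E \ B) \ {b}) A)
    (repb : Represents P B ((M.E \ B) \ {b}) A (del M {b}))
    (ha : a ∈ (M.E \ B) \ {b}) (hb : b ∈ (M.E \ B) \ {a}) (hx : x ∈ B) (hy : y ∈ B)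
    (hxy : x ≠ y) (hw : w ∈ M.E) (hwa : w ≠ a) (hwb : w ≠ b)
    (hacl : a ∈ M.closure (insert w (B \ {x, y}))) :
    minor2 A x y a b ∈ P.carrier ∧
      (minor2 A x y a b = 0 ↔ ¬ M.Indep (insert a (insert b (B \ {x, y})))) := by
  by_cases haI : a ∈ M.closure (B \ {x, y})
  · have h0 := minor2_eq_zero_of_mem_closure repb ha hx hy haI
    refine ⟨h0 ▸ P.zero_mem_carrier, iff_of_true h0 ?_⟩
    exact not_indep_insert_of_mem_closure haI (fun h => ha.1.2 h.1) (Set.subset_insert _ _)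
  have hwI : w ∉ M.closure (B \ {x, y}) := (M.closure_exchange ⟨hacl, haI⟩).2
  have hBxy : (B \ {x}) ∩ (B \ {y}) = B \ {x, y} := by
    ext t; simp only [Set.mem_inter_iff, Set.mem_sdiff, Set.mem_insert_iff,
      Set.mem_singleton_iff]; grind
  rw [← hBxy, (repb.indep_of_del.subset (Set.union_subset Set.sdiff_subset
    Set.sdiff_subset)).closure_inter_eq_inter_closure, Set.mem_inter_iff, not_and_or] at hwI
  rcases hwI with hwx | hwy
  · exact minor2_mem_and_eq_zero_iff_of_notMem_closure pma repa pmb repb ha hb hx hy hxy hw hwa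
      hwb hacl haI hwx
  · rw [Set.pair_comm] at hacl haI ⊢
    have h := minor2_mem_and_eq_zero_iff_of_notMem_closure pma repa pmb repb ha hb hy hx hxy.symm
      hw hwa hwb hacl haI hwy
    rwa [minor2_swap_rows, PartialField.neg_mem_carrier_iff, neg_eq_zero] at h

lemma not_incriminates_of_minor2_mem_of_eq_zero_iff (hx : x ∈ B) (hy : y ∈ B) (hxy : x ≠ y)
    (ha : a ∈ M.E \ B) (hb : b ∈ M.E \ B) (hmem : minor2 A x y a b ∈ P.carrier)
    (hzero : minor2 A x y a b = 0 ↔ ¬ M.Indep (insert a (insert b (B \ {x, y})))) :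
    ¬ Incriminates P M B A {a, b, x, y} := by
  rintro ⟨-, Xz, Yz, e, hXz, hYz, hinc⟩
  have hXZ : B ∩ {a, b, x, y} = {x, y} := by
    ext t; simp only [Set.mem_inter_iff, Set.mem_insert_iff, Set.mem_singleton_iff]
    have := ha.2; have := hb.2; grind
  have hYZ : (M.E \ B) ∩ {a, b, x, y} = {a, b} := by
    ext t; simp only [Set.mem_inter_iff, Set.mem_sdiff, Set.mem_insert_iff, Set.mem_singleton_iff]
    have := ha.1; have := hb.1; grind
  have hsd : symmDiff B {a, b, x, y} = insert a (insert b (B \ {x, y})) := by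
    ext t; simp only [Set.mem_symmDiff, Set.mem_insert_iff, Set.mem_sdiff, Set.mem_singleton_iff]
    have := ha.2; have := hb.2; grind
  rw [hsd] at hinc
  rcases subdet_eq_minor2_or_neg hxy (hXz.trans hXZ) (hYz.trans hYZ) e with h | h <;>
    rw [h] at hinc <;>
    simp only [PartialField.neg_mem_carrier_iff, neg_eq_zero, ne_eq] at hinc <;>
    rcases hinc with h1 | ⟨h0, hbase⟩ | ⟨h0, hdep⟩
  all_goals first
    | exact h1 hmem
    | exact hzero.mp h0 hbase.indep
    | exact h0 (hzero.mpr hdep.not_indep)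

theorem not_incriminates_of_mem_closure [M.RankFinite]
    (pma : IsPMatrix P B ((M.E \ B) \ {a}) A)
    (repa : Represents P B ((M.E \ B) \ {a}) A (del M {a}))
    (pmb : IsPMatrix P B ((M.E \ B) \ {b}) A)
    (repb : Represents P B ((M.E \ B) \ {b}) A (del M {b}))
    (ha : a ∈ (M.E \ B) \ {b}) (hb : b ∈ (M.E \ B) \ {a}) (hx : x ∈ B) (hy : y ∈ B)
    (hxy : x ≠ y) (hw : w ∈ M.E) (hwa : w ≠ a) (hwb : w ≠ b)
    (hacl : a ∈ M.closure (insert w (B \ {x, y}))) :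
    ¬ Incriminates P M B A {a, b, x, y} :=
  have h :=
    minor2_mem_and_eq_zero_iff_of_mem_closure pma repa pmb repb ha hb hx hy hxy hw hwa hwb hacl
  not_incriminates_of_minor2_mem_of_eq_zero_iff hx hy hxy ha.1 hb.1 h.1 h.2

end Core

lemma SeriesClass.subset_ground {M : Matroid α} {S : Set α} (h : SeriesClass M S) :
    S ⊆ M.E := by
  obtain ⟨e, -, rfl⟩ := h
  exact fun f hf => hf.2.1.subset_ground rfl

lemma _root_.Set.exists_eq_pair_of_encard_eq_two {S : Set α} {z : α} (hS : S.encard = 2)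
    (hz : z ∈ S) : ∃ w, S = {z, w} := by
  obtain ⟨w, hw⟩ := Set.encard_eq_one.mp (by rw [Set.encard_sdiff_singleton_of_mem hz, hS]; rfl)
  exact ⟨w, by rw [← hw, Set.insert_sdiff_singleton, Set.insert_eq_of_mem hz]⟩

lemma Setup.false_of_mem_closure {P : PartialField} {M N : Matroid α} {a b x y w : α}
    {B : Set α} {A : α → α → P.R} (st : Setup P M N a b x y B A) (hw : w ∈ M.E \ {a, b})
    (hcl : a ∈ M.closure (insert w (B \ {x, y})) ∨ b ∈ M.closure (insert w (B \ {x, y}))) :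
    False := by
  have := st.mFin
  have hBab : B ⊆ M.E \ {a, b} := st.hB.subset_ground
  have ha : a ∈ (M.E \ B) \ {b} := ⟨⟨st.haE, fun h => (hBab h).2 (by simp)⟩, st.hab⟩
  have hb : b ∈ (M.E \ B) \ {a} := ⟨⟨st.hbE, fun h => (hBab h).2 (by simp)⟩, st.hab.symm⟩
  have hwa : w ≠ a := fun h => hw.2 (by simp [h])
  have hwb : w ≠ b := fun h => hw.2 (by simp [h])
  obtain ⟨pma, pmb, repa, repb, -⟩ := st.hComp
  rcases hcl with hacl | hbcl
  · exact not_incriminates_of_mem_closure pma repa pmb repb ha hb st.hx st.hy st.hxy hw.1 hwa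
      hwb hacl st.hInc
  · refine not_incriminates_of_mem_closure pmb repb pma repa hb ha st.hx st.hy st.hxy hw.1 hwb
      hwa hbcl ?_
    rw [Set.insert_comm]
    exact st.hInc

theorem statement_9_general (P : PartialField) (M N : Matroid α) (a b x y : α) (B : Set α)
    (A : α → α → P.R) (st : Setup P M N a b x y B A)
    (u : α) (S : Set α) (hS : UnstableSeriesPair M a b u S) :
    S ∩ B ⊆ {x, y} := by
  obtain ⟨hser, hS2, hcl⟩ := hS
  rintro z ⟨hzS, hzB⟩
  by_contra hzxy
  obtain ⟨w, rfl⟩ := Set.exists_eq_pair_of_encard_eq_two hS2 hzS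
  have hw : w ∈ M.E \ {a, b, u} := hser.subset_ground (Set.mem_insert_of_mem z rfl)
  have hSI : {z, w} ⊆ insert w (B \ {x, y}) :=
    Set.insert_subset (Or.inr ⟨hzB, hzxy⟩) (Set.singleton_subset_iff.mpr (Set.mem_insert w _))
  refine st.false_of_mem_closure ⟨hw.1, fun h => hw.2 ?_⟩ (hcl.imp (M.closure_mono hSI ·)
    (M.closure_mono hSI ·))
  simp only [Set.mem_insert_iff, Set.mem_singleton_iff] at h ⊢
  tauto

/-- Lemma 3.6, `unstablemeetsxy`. -/
theorem statement_9 (P : PartialField) (M N : Matroid α) (a b x y : α) (B : Set α)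
    (A : α → α → P.R) (st : Setup P M N a b x y B A)
    (u : α) (hu : Strong N (del M {a, b}) B u) (huxy : u ∉ ({x, y} : Set α))
    (S : Set α) (hS : UnstableSeriesPair M a b u S) :
    S ∩ B ⊆ {x, y} :=
  statement_9_general P M N a b x y B A st u S hS

end ExcludedMinorsFragile
end

section
/- Assume the Setup, and additionally suppose that B is a robust basis for M. If M∖{a,b} has no (N,B)-robust elements outside of {x,y}, then M∖{a,b} is N-fragile. -/
open Set Matroid

namespace ExcludedMinorsFragile

variable {α : Type*}

variable {α : Type*}

/-!
The companion matrix exhibits an `N`-minor `N'` of `M ∖ {a,b}` represented by the submatrix of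
`A` with rows `X' ⊆ B` and columns `Y'`. As `A` also represents `M ∖ a`, this forces
`N' = (M ∖ a) / (B - X') ∖ (columns outside Y')`, so every non-basis element `d ≠ b` outside `Y'`
could be deleted from `M ∖ {a,b}` keeping `N'`, making `d` robust. Hence `Y' = E(M ∖ {a,b}) - B`
and `N` has the same corank as `M ∖ {a,b}`. Corank does not increase under taking minors and drops
when a non-coloop is deleted; since `M ∖ {a,b}` is 3-connected, no element of it is even
`N`-deletable.
-/

section MatroidMinors

variable {M N : Matroid α} {C D X : Set α} {e : α}

lemma _root_.Matroid.IsMinor.dual (h : N ≤m M) : N✶ ≤m M✶ := by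
  obtain ⟨C, D, rfl⟩ := h
  rw [dual_contract_delete, delete_contract_comm']
  exact contract_delete_isMinor _ _ _

lemma _root_.Matroid.IsMinor.eRank_le (h : N ≤m M) : N.eRank ≤ M.eRank := by
  obtain ⟨B, hB⟩ := N.exists_isBase
  rw [← hB.encard_eq_eRank]
  exact (hB.indep.of_isMinor h).encard_le_eRank

lemma _root_.Matroid.contract_delete_isMinor_delete (hXD : X ⊆ D) (hXC : Disjoint X C) :
    M ／ C ＼ D ≤m M ＼ X := by
  rw [← union_sdiff_cancel hXD, ← delete_delete, contract_delete_comm _ hXC.symm]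
  exact contract_delete_isMinor _ _ _

lemma _root_.Matroid.dual_eRank_delete_singleton_add_one (he : e ∈ M.E) (hne : ¬ M.IsColoop e) :
    (M ＼ {e})✶.eRank + 1 = M✶.eRank := by
  obtain ⟨B, hB, heB⟩ : ∃ B, M.IsBase B ∧ e ∉ B := by
    simpa [isColoop_iff_forall_mem_isBase] using hne
  have hBe : (M ＼ {e}).IsBase B :=
    (coindep_iff_subset_compl_isBase.2 ⟨B, hB, by simpa using And.intro he heB⟩
      ).delete_isBase_iff.2 ⟨hB, by simpa using heB⟩
  rw [← hB.encard_compl_eq, ← hBe.encard_compl_eq, delete_ground, sdiff_sdiff_comm]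
  exact encard_sdiff_singleton_add_one ⟨he, heB⟩

lemma _root_.Matroid.dual_eRank_delete_singleton_lt [M✶.RankFinite] (he : e ∈ M.E)
    (hne : ¬ M.IsColoop e) : (M ＼ {e})✶.eRank < M✶.eRank := by
  have h := dual_eRank_delete_singleton_add_one he hne
  have hfin : (M ＼ {e})✶.eRank ≠ ⊤ :=
    ne_top_of_le_ne_top (M✶.eRank_ne_top_iff.2 ‹_›) (h ▸ le_self_add)
  exact (ENat.add_one_le_iff hfin).1 h.le

end MatroidMinors

section NMinors

variable {M N : Matroid α}

lemma isMinorOf_iff : IsMinorOf N M ↔ N ≤m M := by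
  constructor
  · rintro ⟨C, D, -, -, -, rfl⟩
    exact contract_delete_isMinor M C D
  intro h
  obtain ⟨C, D, hC, hD, hCD, rfl⟩ := h.exists_eq_contract_delete_disjoint
  exact ⟨C, D, hCD, hC, hD, rfl⟩

lemma hasNMinor_iff : HasNMinor M N ↔ ∃ N', N' ≤m M ∧ MatIso N' N := by
  simp only [HasNMinor, isMinorOf_iff]

lemma eRk_eq_eRk (M : Matroid α) (X : Set α) : eRk M X = M.eRk X := by
  refine le_antisymm (iSup₂_le fun I hI => hI.1.encard_le_eRk_of_subset hI.2) ?_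
  obtain ⟨I, hI⟩ := M.exists_isBasis' X
  rw [← hI.encard_eq_eRk]
  exact le_iSup₂ (f := fun I (_ : I ∈ {I | M.Indep I ∧ I ⊆ X}) => I.encard) I
    ⟨hI.indep, hI.subset⟩

lemma MatIso.encard_ground_eq (h : MatIso M N) : M.E.encard = N.E.encard := by
  obtain ⟨f, hf, -⟩ := h
  rw [← hf.image_eq, hf.injOn.encard_image]

lemma MatIso.dual_eRank_eq (h : MatIso M N) : M✶.eRank = N✶.eRank := by
  obtain ⟨f, hf, hind⟩ := h
  obtain ⟨B, hB⟩ := M.exists_isBase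
  have hfB : N.IsBase (f '' B) := by
    rw [isBase_iff_maximal_indep]
    refine ⟨(hind B hB.subset_ground).1 hB.indep, fun J hJ hBJ => ?_⟩
    have hJ' : f '' (M.E ∩ f ⁻¹' J) = J := by
      rw [image_inter_preimage, hf.image_eq, inter_eq_right.2 hJ.subset_ground]
    rw [← hJ'] at hJ ⊢
    rw [← hind _ inter_subset_left] at hJ
    refine image_mono (hB.eq_of_subset_indep hJ fun x hx => ⟨hB.subset_ground hx, ?_⟩).symm.le
    exact hBJ (mem_image_of_mem f hx)
  rw [← hB.encard_compl_eq, ← hfB.encard_compl_eq, ← hf.image_eq,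
    ← hf.injOn.image_sdiff_subset hB.subset_ground, (hf.injOn.mono sdiff_subset).encard_image]

lemma HasNMinor.encard_ground_le (h : HasNMinor M N) : N.E.encard ≤ M.E.encard := by
  obtain ⟨N', hN'M, hN'N⟩ := hasNMinor_iff.1 h
  exact hN'N.encard_ground_eq.symm.le.trans (encard_mono hN'M.subset)

lemma HasNMinor.dual_eRank_le (h : HasNMinor M N) : N✶.eRank ≤ M✶.eRank := by
  obtain ⟨N', hN'M, hN'N⟩ := hasNMinor_iff.1 h
  exact hN'N.dual_eRank_eq.symm.le.trans hN'M.dual.eRank_le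

lemma ThreeConnected.not_isColoop (h : ThreeConnected M) (hE : 2 ≤ M.E.encard) (e : α) :
    ¬ M.IsColoop e := by
  intro he
  have heE : e ∈ M.E := he.mem_ground
  have hcard := encard_sdiff_singleton_add_one heE
  refine h 1 {e} (M.E \ {e}) (by norm_num)
    ⟨disjoint_sdiff_right, by simpa using heE, by simp, ?_, ?_⟩
  · rw [Nat.cast_one, Order.one_le_iff_ne_zero]
    intro h0
    rw [h0, zero_add] at hcard
    rw [← hcard] at hE
    norm_num at hE
  · have hrk : M.eRk (M.E \ {e}) + 1 = M.eRank := by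
      rw [← eRk_insert_eq_add_one ⟨heE, (isColoop_iff_notMem_closure_compl heE).1 he⟩,
        insert_sdiff_singleton, insert_eq_of_mem heE, eRk_ground]
    rw [eRk_eq_eRk, eRk_eq_eRk, eRk_eq_eRk, eRk_ground, ← hrk, Nat.cast_one, add_comm (M.eRk {e})]
    gcongr
    exact M.eRk_singleton_le e

end NMinors

section Represents

variable {P : PartialField} {A : α → α → P.R} {X Y X' Y' S Z : Set α}

lemma union_sdiff_eq_symmDiff_iff (hX' : X' ⊆ X) (hXY' : Disjoint X Y') (hS : S ⊆ X' ∪ Y') :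
    S ∪ (X \ X') = symmDiff X Z ↔ Z ⊆ X' ∪ Y' ∧ S = symmDiff X' Z := by
  simp only [Set.ext_iff, Set.subset_def, Set.mem_union, Set.mem_sdiff, Set.mem_symmDiff,
    Set.disjoint_left] at *
  grind

lemma inter_eq_inter_of_subset_union (hX' : X' ⊆ X) (hXY' : Disjoint X Y') (hZ : Z ⊆ X' ∪ Y') :
    X ∩ Z = X' ∩ Z := by
  simp only [Set.ext_iff, Set.subset_def, Set.mem_union, Set.mem_inter_iff,
    Set.disjoint_left] at *
  grind

lemma nonzeroSubdet_congr (hX : X ∩ Z = X' ∩ Z) (hY : Y ∩ Z = Y' ∩ Z) :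
    NonzeroSubdet P A X Y Z ↔ NonzeroSubdet P A X' Y' Z := by
  rw [NonzeroSubdet, NonzeroSubdet, hX, hY]

lemma represents_isBase_condition_iff (hXY : Disjoint X Y) (hX' : X' ⊆ X) (hY' : Y' ⊆ Y)
    (hS : S ⊆ X' ∪ Y') :
    (S ∪ (X \ X') = X ∨ ∃ Z ⊆ X ∪ Y, S ∪ (X \ X') = symmDiff X Z ∧
        (X ∩ Z).encard = (Y ∩ Z).encard ∧ NonzeroSubdet P A X Y Z) ↔
      (S = X' ∨ ∃ Z ⊆ X' ∪ Y', S = symmDiff X' Z ∧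
        (X' ∩ Z).encard = (Y' ∩ Z).encard ∧ NonzeroSubdet P A X' Y' Z) := by
  have hXY' : Disjoint X Y' := hXY.mono_right hY'
  have key (Z : Set α) := union_sdiff_eq_symmDiff_iff (Z := Z) hX' hXY' hS
  have hXZ {Z : Set α} (hZ : Z ⊆ X' ∪ Y') : X ∩ Z = X' ∩ Z :=
    inter_eq_inter_of_subset_union hX' hXY' hZ
  have hYZ {Z : Set α} (hZ : Z ⊆ X' ∪ Y') : Y ∩ Z = Y' ∩ Z :=
    inter_eq_inter_of_subset_union hY' (hXY.mono_left hX').symm (union_comm X' Y' ▸ hZ)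
  have hempty := key ⊥
  rw [symmDiff_bot, symmDiff_bot] at hempty
  refine or_congr (by simpa using hempty) ⟨?_, ?_⟩
  · rintro ⟨Z, -, hSZ, hcard, hnz⟩
    obtain ⟨hZ, rfl⟩ := (key Z).1 hSZ
    exact ⟨Z, hZ, rfl, hXZ hZ ▸ hYZ hZ ▸ hcard, (nonzeroSubdet_congr (hXZ hZ) (hYZ hZ)).1 hnz⟩
  · rintro ⟨Z, hZ, rfl, hcard, hnz⟩
    exact ⟨Z, hZ.trans (union_subset_union hX' hY'), (key Z).2 ⟨hZ, rfl⟩,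
      hXZ hZ ▸ hYZ hZ ▸ hcard, (nonzeroSubdet_congr (hXZ hZ) (hYZ hZ)).2 hnz⟩

lemma Represents.eq_contract_delete {Q N : Matroid α} (hQ : Represents P X Y A Q)
    (hN : Represents P X' Y' A N) (hX' : X' ⊆ X) (hY' : Y' ⊆ Y) :
    N = Q ／ (X \ X') ＼ (Y \ Y') := by
  obtain ⟨hXY, hQE, hQbase⟩ := hQ
  obtain ⟨-, hNE, hNbase⟩ := hN
  have hX : Q.IsBase X := (hQbase X).2 (Or.inl rfl)
  have hK : Q.Indep (X \ X') := hX.indep.subset sdiff_subset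
  have hX'K : (Q ／ (X \ X')).IsBase X' := by
    rw [hK.contract_isBase_iff, union_sdiff_cancel hX']
    exact ⟨hX, disjoint_sdiff_right⟩
  have hL : (Q ／ (X \ X')).Coindep (Y \ Y') := by
    refine coindep_iff_subset_compl_isBase.2 ⟨X', hX'K, ?_⟩
    rw [contract_ground, hQE]
    simp only [Set.subset_def, Set.mem_sdiff, Set.mem_union, Set.disjoint_left] at *
    grind
  have hground : (Q ／ (X \ X') ＼ (Y \ Y')).E = X' ∪ Y' := by
    rw [delete_ground, contract_ground, hQE]
    simp only [Set.ext_iff, Set.subset_def, Set.mem_sdiff, Set.mem_union, Set.disjoint_left] at *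
    grind
  refine ext_isBase (hNE.trans hground.symm) fun S hS => ?_
  rw [hNE] at hS
  rw [hNbase, hL.delete_isBase_iff, hK.contract_isBase_iff, hQbase,
    represents_isBase_condition_iff hXY hX' hY' hS, and_assoc, iff_self_and]
  intro
  simp only [Set.subset_def, Set.mem_sdiff, Set.mem_union, Set.disjoint_left] at *
  grind

end Represents

lemma nDeletable_of_represents {P : PartialField} {M N N' : Matroid α} {a b d : α}
    {A : α → α → P.R} {B X' Y' : Set α} (hab : a ≠ b) (hbE : b ∈ M.E) (hB : B ⊆ M.E \ {a, b})
    (hrepa : Represents P B ((M.E \ B) \ {a}) A (del M {a}))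
    (hrepN : Represents P X' Y' A N') (hX' : X' ⊆ B) (hY' : Y' ⊆ (M.E \ B) \ {a, b})
    (hiso : MatIso N' N) (hd : d ∈ (del M {a, b}).E \ B) (hdY : d ∉ Y') :
    NDeletable N (del M {a, b}) d := by
  have hY'a : Y' ⊆ (M.E \ B) \ {a} := hY'.trans (sdiff_subset_sdiff_right (by simp))
  refine hasNMinor_iff.2 ⟨N', ?_, hiso⟩
  have hdel : M ＼ {a, b} ＼ {d} = M ＼ {a} ＼ {b, d} := by
    rw [delete_delete, delete_delete]
    congr 1
    ext
    simp only [mem_union, mem_insert_iff, mem_singleton_iff]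
    tauto
  change N' ≤m M ＼ {a, b} ＼ {d}
  rw [hrepa.eq_contract_delete hrepN hX' hY'a, hdel]
  have hd' : d ∈ (M.E \ {a, b}) \ B := hd
  refine contract_delete_isMinor_delete ?_ ?_ <;>
  simp only [Set.subset_def, Set.disjoint_left, Set.mem_sdiff, Set.mem_insert_iff,
    Set.mem_singleton_iff] at * <;>
  grind

theorem statement_19_general (P : PartialField) (M N : Matroid α) (a b x y : α) (B : Set α)
    (A : α → α → P.R) (st : Setup P M N a b x y B A)
    (hno : ∀ e ∈ (del M {a, b}).E, e ∉ ({x, y} : Set α) → ¬ Robust N (del M {a, b}) B e) :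
    NFragile N (del M {a, b}) := by
  have : (del M {a, b}).Finite := @delete_finite _ M _ st.mFin
  obtain ⟨N', X', Y', hiso, -, hNE, hX'base, hX'B, hY'B, -, hrepN⟩ := st.hComp.repN
  have hcompl : (del M {a, b}).E \ B ⊆ Y' := fun d hd => by
    by_contra hdY
    refine hno d hd.1 (fun hxy => hd.2 ?_) (Or.inr ⟨hd, nDeletable_of_represents st.hab st.hbE
      st.hB.subset_ground st.hComp.repa hrepN hX'B hY'B hiso hd hdY⟩)
    rcases hxy with rfl | rfl
    exacts [st.hx, st.hy]
  have hcorank : (del M {a, b})✶.eRank ≤ N✶.eRank := calc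
    (del M {a, b})✶.eRank = ((del M {a, b}).E \ B).encard := st.hB.encard_compl_eq.symm
    _ ≤ Y'.encard := encard_mono hcompl
    _ = N'✶.eRank := by
      rw [← hX'base.encard_compl_eq, hNE, union_sdiff_cancel_left hrepN.1.inter_eq.subset]
    _ = N✶.eRank := hiso.dual_eRank_eq
  refine ⟨st.hNminor, fun e he hflex => ?_⟩
  have hE : 2 ≤ (del M {a, b}).E.encard :=
    le_trans (by norm_num) (st.hNcard.trans st.hNminor.encard_ground_le)
  have hlt := dual_eRank_delete_singleton_lt he (st.h3conn.not_isColoop hE e)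
  exact (hflex.1.dual_eRank_le.trans_lt hlt).not_ge hcorank

/-- Lemma 6.4, `norobustfragile`. -/
theorem statement_19 (P : PartialField) (M N : Matroid α) (a b x y : α) (B : Set α)
    (A : α → α → P.R) (st : Setup P M N a b x y B A)
    (hrb : RobustBasis P M N a b B A x y)
    (hno : ∀ e ∈ (del M {a, b}).E, e ∉ ({x, y} : Set α) → ¬ Robust N (del M {a, b}) B e) :
    NFragile N (del M {a, b}) :=
  statement_19_general P M N a b x y B A st hno

end ExcludedMinorsFragile
end
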